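/- Let (x,y) ∈ W and let δ denote the Dirac measure at ι(x,y) on K. Then: (i) for every finite positive Radon Borel measure μ on K satisfying ∫ Φf dμ = (f(x) − f(y))/d(x,y) for all Lipschitz f : M → ℝ with f(0) = 0, one has δ ≼ μ; (ii) δ is minimal; (iii) δ is the unique such minimal representation: if μ is a minimal finite positive Radon Borel measure on K with ∫ Φf dμ = (f(x) − f(y))/d(x,y) for all Lipschitz f : M → ℝ with f(0) = 0, then μ = δ. -/

import Mathlib

open MeasureTheory

/-- `Wt M` is the set `W = {(x,y) ∈ M × M : x ≠ y}`, a topological subspace of `M × M`. -/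
abbrev Wt (M : Type*) [MetricSpace M] := {p : M × M // p.1 ≠ p.2}

/-- `g : W → ℝ` satisfies the G-inequality. -/
def GIneq {M : Type*} [MetricSpace M] (g : Wt M → ℝ) : Prop :=
  ∀ (x u y : M) (hxu : x ≠ u) (huy : u ≠ y) (hxy : x ≠ y),
    dist x y * g ⟨(x, y), hxy⟩ ≤ dist x u * g ⟨(x, u), hxu⟩ + dist u y * g ⟨(u, y), huy⟩

/-- The cone `G` of continuous functions on `K = βW` satisfying the G-inequality
on points of `W`. -/
def GSet (M : Type*) [MetricSpace M] : Set (StoneCech (Wt M) → ℝ) :=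
  {g | Continuous g ∧ GIneq fun p => g (stoneCechUnit p)}

/-- The Choquet-like quasi-order `μ ≼ ν`. -/
def Preceq {M : Type*} [MetricSpace M] [MeasurableSpace (StoneCech (Wt M))]
    (μ ν : Measure (StoneCech (Wt M))) : Prop :=
  ∀ g ∈ GSet M, ∫ ζ, g ζ ∂μ ≤ ∫ ζ, g ζ ∂ν

/-- `μ` is `≼`-minimal among finite positive Radon Borel measures. -/
def IsMinimal {M : Type*} [MetricSpace M] [MeasurableSpace (StoneCech (Wt M))]
    (μ : Measure (StoneCech (Wt M))) : Prop :=
  ∀ ν : Measure (StoneCech (Wt M)),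
    IsFiniteMeasure ν → ν.InnerRegular → Preceq ν μ → Preceq μ ν

/-- `μ` is a De Leeuw representation of the elementary molecule `m_{xy}`, `p = (x,y)`:
`∫ Φf dμ = (f x − f y)/d(x,y)` for every base-point-normalised Lipschitz `f`, where `Φf`
is the unique continuous extension to `βW` of `(u,v) ↦ (f u − f v)/d(u,v)`. -/
def RepresentsMolecule {M : Type*} [MetricSpace M] [MeasurableSpace (StoneCech (Wt M))]
    (basept : M) (p : Wt M) (μ : Measure (StoneCech (Wt M))) : Prop :=
  ∀ f : M → ℝ, (∃ C : NNReal, LipschitzWith C f) → f basept = 0 →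
    ∀ F : StoneCech (Wt M) → ℝ, Continuous F →
      (∀ q : Wt M, F (stoneCechUnit q) = (f q.1.1 - f q.1.2) / dist q.1.1 q.1.2) →
      ∫ ζ, F ζ ∂μ = (f p.1.1 - f p.1.2) / dist p.1.1 p.1.2

/-!
Part (i): given `g ∈ G`, the potential `f t = d(t, y) g(t, y)` satisfies
`f u - f v ≤ d(u, v) g(u, v)` by the G-inequality, so `Φf ≤ g` while `Φf(x, y) = g(x, y)`;
integrating against a representation `μ` gives `g(x, y) ≤ ∫ g dμ`. Part (ii) follows because
`±Φf ∈ G`, so any `ν ≼ δ` is again a representation. For (iii), a minimal representation `μ`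
satisfies `μ ≼ δ`; every point `ζ ≠ ι(x, y)` is separated from `ι(x, y)` by a nonnegative
`g ∈ G` vanishing at `ι(x, y)`, so `ζ` has a `μ`-null neighbourhood, and inner regularity
concentrates `μ` at `ι(x, y)`.
-/

open Filter Topology Set
open scoped NNReal

theorem exists_ne_ne_of_three {α : Type*} (h3 : ∃ x y z : α, x ≠ y ∧ x ≠ z ∧ y ≠ z) (u v : α) :
    ∃ a, a ≠ u ∧ a ≠ v := by
  obtain ⟨x, y, z, hxy, hxz, hyz⟩ := h3
  by_contra! h
  rcases eq_or_ne x u with rfl | hx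
  · exact hyz ((h y hxy.symm).trans (h z hxz.symm).symm)
  rcases eq_or_ne y u with rfl | hy
  · exact hxz ((h x hx).trans (h z hyz.symm).symm)
  · exact hxy ((h x hx).trans (h y hy).symm)

theorem LipschitzWith.abs_sub_div_dist_le {α : Type*} [PseudoMetricSpace α] {f : α → ℝ} {C : ℝ≥0}
    (hf : LipschitzWith C f) (u v : α) : |(f u - f v) / dist u v| ≤ C := by
  rw [abs_div, abs_of_nonneg dist_nonneg]
  exact div_le_of_le_mul₀ dist_nonneg C.2 (by simpa [Real.dist_eq] using hf.dist_le_mul u v)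

theorem MeasureTheory.Measure.innerRegular_dirac {α : Type*} [TopologicalSpace α]
    [MeasurableSpace α] (a : α) : (Measure.dirac a).InnerRegular := by
  refine ⟨fun U hU r hr => ⟨{a}, ?_, isCompact_singleton, ?_⟩⟩
  all_goals have ha : a ∈ U := by by_contra h; simp [Measure.dirac_apply' _ hU, h] at hr
  · exact singleton_subset_iff.2 ha
  · rwa [Measure.dirac_apply_of_mem (mem_singleton a), ← Measure.dirac_apply_of_mem ha]

theorem MeasureTheory.measure_eq_zero_of_forall_nhds_null {α : Type*} [TopologicalSpace α]
    [MeasurableSpace α] {μ : Measure α} [μ.InnerRegular] {s : Set α} (hs : MeasurableSet s)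
    (h : ∀ a ∈ s, ∃ t ∈ 𝓝 a, μ t = 0) : μ s = 0 := by
  rw [hs.measure_eq_iSup_isCompact, ENNReal.iSup_eq_zero]
  refine fun K => ENNReal.iSup_eq_zero.2 fun hKs => ENNReal.iSup_eq_zero.2 fun hK => ?_
  refine hK.measure_zero_of_nhdsWithin fun a ha => ?_
  obtain ⟨t, ht, ht0⟩ := h a (hKs ha)
  exact ⟨t, mem_nhdsWithin_of_mem_nhds ht, ht0⟩

theorem Continuous.integrable_of_compactSpace {X : Type*} [TopologicalSpace X] [CompactSpace X]
    [MeasurableSpace X] [OpensMeasurableSpace X] {μ : Measure X} [IsFiniteMeasure μ] {f : X → ℝ}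
    (hf : Continuous f) : Integrable f μ :=
  hf.integrable_of_hasCompactSupport (.of_compactSpace f)

section DeLeeuw

variable {M : Type*} [MetricSpace M]

/-- `F` is the de Leeuw transform `Φf` of `f`. -/
def IsDeLeeuwTransform (f : M → ℝ) (F : StoneCech (Wt M) → ℝ) : Prop :=
  Continuous F ∧ ∀ q : Wt M, F (stoneCechUnit q) = (f q.1.1 - f q.1.2) / dist q.1.1 q.1.2

theorem exists_isDeLeeuwTransform {f : M → ℝ} {C : ℝ≥0} (hf : LipschitzWith C f) :
    ∃ F, IsDeLeeuwTransform f F := by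
  have : CompactSpace (Icc (-(C : ℝ)) C) := isCompact_iff_compactSpace.1 isCompact_Icc
  have hφ : Continuous fun q : Wt M => (⟨(f q.1.1 - f q.1.2) / dist q.1.1 q.1.2,
      abs_le.1 (hf.abs_sub_div_dist_le _ _)⟩ : Icc (-(C : ℝ)) C) := by
    refine Continuous.subtype_mk (Continuous.div ?_ ?_ fun q => dist_ne_zero.2 q.2) _
    · exact (hf.continuous.comp (continuous_fst.comp continuous_subtype_val)).sub
        (hf.continuous.comp (continuous_snd.comp continuous_subtype_val))
    · exact (continuous_fst.comp continuous_subtype_val).dist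
        (continuous_snd.comp continuous_subtype_val)
  exact ⟨fun ζ => (stoneCechExtend hφ ζ : Icc (-(C : ℝ)) C),
    continuous_subtype_val.comp (continuous_stoneCechExtend hφ),
    fun q => congrArg Subtype.val (congrFun (stoneCechExtend_extends hφ) q)⟩

namespace IsDeLeeuwTransform

variable {f h : M → ℝ} {F H : StoneCech (Wt M) → ℝ}

theorem dist_mul_apply (hF : IsDeLeeuwTransform f F) {u v : M} (huv : u ≠ v) :
    dist u v * F (stoneCechUnit ⟨(u, v), huv⟩) = f u - f v := by
  rw [hF.2, mul_div_cancel₀ _ (dist_ne_zero.2 huv)]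

theorem neg (hF : IsDeLeeuwTransform f F) : IsDeLeeuwTransform (-f) (-F) :=
  ⟨hF.1.neg, fun q => by simp only [Pi.neg_apply, hF.2 q]; ring⟩

theorem sub (hF : IsDeLeeuwTransform f F) (hH : IsDeLeeuwTransform h H) :
    IsDeLeeuwTransform (f - h) (F - H) :=
  ⟨hF.1.sub hH.1, fun q => by simp only [Pi.sub_apply, hF.2 q, hH.2 q]; ring⟩

theorem smul (hF : IsDeLeeuwTransform f F) (a : ℝ) : IsDeLeeuwTransform (a • f) (a • F) :=
  ⟨hF.1.const_smul a, fun q => by simp only [Pi.smul_apply, smul_eq_mul, hF.2 q]; ring⟩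

theorem abs_le {C : ℝ≥0} (hf : LipschitzWith C f) (hF : IsDeLeeuwTransform f F)
    (ζ : StoneCech (Wt M)) : |F ζ| ≤ C :=
  denseRange_stoneCechUnit.induction_on ζ (isClosed_le hF.1.abs continuous_const)
    fun q => (hF.2 q).symm ▸ hf.abs_sub_div_dist_le _ _

end IsDeLeeuwTransform

theorem GIneq.add_swap_nonneg (h3 : ∃ x y z : M, x ≠ y ∧ x ≠ z ∧ y ≠ z) {g : Wt M → ℝ}
    (hg : GIneq g) {u v : M} (huv : u ≠ v) : 0 ≤ g ⟨(u, v), huv⟩ + g ⟨(v, u), huv.symm⟩ := by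
  obtain ⟨a, hau, hav⟩ := exists_ne_ne_of_three h3 u v
  have h1 := hg u v a huv hav.symm hau.symm
  have h2 := hg v u a huv.symm hau.symm hav.symm
  rw [dist_comm v u] at h2
  exact nonneg_of_mul_nonneg_right (by linarith) (dist_pos.2 huv)

open scoped Classical in
noncomputable def potential (g : Wt M → ℝ) (y t : M) : ℝ :=
  if ht : t = y then 0 else dist t y * g ⟨(t, y), ht⟩

theorem GIneq.potential_sub_le (h3 : ∃ x y z : M, x ≠ y ∧ x ≠ z ∧ y ≠ z) {g : Wt M → ℝ}
    (hg : GIneq g) (y : M) {u v : M} (huv : u ≠ v) :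
    potential g y u - potential g y v ≤ dist u v * g ⟨(u, v), huv⟩ := by
  by_cases hv : v = y
  · subst hv
    rw [potential, potential, dif_neg huv, dif_pos rfl, sub_zero]
  by_cases hu : u = y
  · subst hu
    have := hg.add_swap_nonneg h3 huv
    rw [potential, potential, dif_pos rfl, dif_neg hv, dist_comm v u]
    nlinarith [dist_nonneg (x := u) (y := v)]
  · rw [potential, potential, dif_neg hu, dif_neg hv]
    linarith [hg u v y huv hv hu]

theorem GIneq.lipschitzWith_potential (h3 : ∃ x y z : M, x ≠ y ∧ x ≠ z ∧ y ≠ z)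
    {g : Wt M → ℝ} (hg : GIneq g) {C : ℝ≥0} (hC : ∀ q, g q ≤ C) (y : M) :
    LipschitzWith C (potential g y) := by
  refine LipschitzWith.of_le_add_mul C fun u v => ?_
  rcases eq_or_ne u v with rfl | huv
  · simp
  have := hg.potential_sub_le h3 y huv
  nlinarith [hC ⟨(u, v), huv⟩, dist_nonneg (x := u) (y := v)]

theorem one_mem_GSet : (1 : StoneCech (Wt M) → ℝ) ∈ GSet M :=
  ⟨continuous_const, fun x u y _ _ _ => by simpa using dist_triangle x u y⟩

theorem GSet.add_mem {g h : StoneCech (Wt M) → ℝ} (hg : g ∈ GSet M) (hh : h ∈ GSet M) :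
    g + h ∈ GSet M :=
  ⟨hg.1.add hh.1, fun x u y hxu huy hxy => by
    simp only [Pi.add_apply, mul_add]
    linarith [hg.2 x u y hxu huy hxy, hh.2 x u y hxu huy hxy]⟩

theorem IsDeLeeuwTransform.mem_GSet {f : M → ℝ} {F : StoneCech (Wt M) → ℝ}
    (hF : IsDeLeeuwTransform f F) : F ∈ GSet M :=
  ⟨hF.1, fun x u y hxu huy hxy => by
    simp only [hF.dist_mul_apply]
    linarith⟩

theorem IsDeLeeuwTransform.abs_mem_GSet {f : M → ℝ} {F : StoneCech (Wt M) → ℝ}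
    (hF : IsDeLeeuwTransform f F) : (fun ζ => |F ζ|) ∈ GSet M :=
  ⟨hF.1.abs, fun x u y hxu huy hxy => by
    have e : ∀ {a b : M} (hab : a ≠ b),
        dist a b * |F (stoneCechUnit ⟨(a, b), hab⟩)| = |f a - f b| :=
      fun hab => by rw [← hF.dist_mul_apply hab, abs_mul, abs_of_nonneg dist_nonneg]
    simp only [e]
    exact abs_sub_le _ _ _⟩

theorem eq_stoneCechUnit_of_forall_isDeLeeuwTransform {p : Wt M} {ζ : StoneCech (Wt M)}
    (H : ∀ (f : M → ℝ) (C : ℝ≥0) (F : StoneCech (Wt M) → ℝ), LipschitzWith C f →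
      IsDeLeeuwTransform f F → F ζ = F (stoneCechUnit p)) :
    ζ = stoneCechUnit p := by
  obtain ⟨⟨x, y⟩, hxy⟩ := p
  let l := comap stoneCechUnit (𝓝 ζ)
  have : l.NeBot := comap_neBot_iff_frequently.2 <|
    mem_closure_iff_frequently.1 (denseRange_stoneCechUnit ζ)
  have hl : Tendsto stoneCechUnit l (𝓝 ζ) := tendsto_comap
  have hev : ∀ (f : M → ℝ) (C : ℝ≥0), LipschitzWith C f → f x < f y →
      ∀ᶠ q in l, f q.1.1 < f q.1.2 := by
    intro f C hf hlt
    obtain ⟨F, hF⟩ := exists_isDeLeeuwTransform hf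
    have hζ : F ζ < 0 := by
      rw [H f C F hf hF, hF.2]
      exact div_neg_of_neg_of_pos (sub_neg.2 hlt) (dist_pos.2 hxy)
    filter_upwards [(hF.1.tendsto ζ).comp hl (gt_mem_nhds hζ)] with ⟨⟨u, v⟩, huv⟩ hq
    have := hF.dist_mul_apply huv
    nlinarith [dist_pos.2 huv, show F (stoneCechUnit ⟨(u, v), huv⟩) < 0 from hq]
  -- Testing with `min (d(·, x)) r` and `-min (d(·, y)) r` shows that `q → (x, y)` along `l`.
  have hx : Tendsto (fun q : Wt M => q.1.1) l (𝓝 x) := by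
    refine Metric.tendsto_nhds.2 fun r hr => ?_
    filter_upwards [hev (fun t => min (dist t x) r) 1 ((LipschitzWith.dist_left x).min_const r)
      (by simpa [hr.le] using ⟨hxy.symm, hr⟩)] with q hq
    simpa using hq.trans_le (min_le_right _ _)
  have hy : Tendsto (fun q : Wt M => q.1.2) l (𝓝 y) := by
    refine Metric.tendsto_nhds.2 fun r hr => ?_
    filter_upwards [hev (fun t => -min (dist t y) r) 1
      ((LipschitzWith.dist_left y).min_const r).neg
      (by simpa [hr.le] using ⟨hxy, hr⟩)] with q hq
    simpa using (neg_lt_neg_iff.1 hq).trans_le (min_le_right _ _)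
  have hp : Tendsto id l (𝓝 (⟨(x, y), hxy⟩ : Wt M)) := tendsto_subtype_rng.2 (hx.prodMk_nhds hy)
  exact tendsto_nhds_unique hl ((continuous_stoneCechUnit.tendsto _).comp hp)

theorem exists_mem_GSet_pos_of_ne {p : Wt M} {ζ : StoneCech (Wt M)} (hζ : ζ ≠ stoneCechUnit p) :
    ∃ g ∈ GSet M, 0 ≤ g ∧ g (stoneCechUnit p) = 0 ∧ 0 < g ζ := by
  obtain ⟨f, C, F, hf, hF, hne⟩ : ∃ (f : M → ℝ) (C : ℝ≥0) (F : StoneCech (Wt M) → ℝ),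
      LipschitzWith C f ∧ IsDeLeeuwTransform f F ∧ F ζ ≠ F (stoneCechUnit p) := by
    by_contra! H
    exact hζ (eq_stoneCechUnit_of_forall_isDeLeeuwTransform H)
  obtain ⟨D, hD⟩ := exists_isDeLeeuwTransform (LipschitzWith.dist_left p.1.2)
  have hDp : D (stoneCechUnit p) = 1 := by
    simp only [hD.2, dist_self, sub_zero]
    exact div_self (dist_ne_zero.2 p.2)
  have hD1 : ∀ ζ', D ζ' ≤ 1 := fun ζ' =>
    (le_abs_self _).trans (by simpa using hD.abs_le (LipschitzWith.dist_left _) ζ')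
  -- `|Φ(f - a d(·, y))|` and `1 - Φd(·, y)` both vanish at `ι p`; they cannot both vanish at `ζ`.
  set a := F (stoneCechUnit p)
  refine ⟨(fun ζ' => |(F - a • D) ζ'|) + (1 + -D), ?_, fun ζ' => ?_, ?_, ?_⟩
  · exact GSet.add_mem (hF.sub (hD.smul a)).abs_mem_GSet
      (GSet.add_mem one_mem_GSet hD.neg.mem_GSet)
  · simp only [Pi.add_apply, Pi.one_apply, Pi.neg_apply, Pi.zero_apply]
    linarith [abs_nonneg ((F - a • D) ζ'), hD1 ζ']
  · simp [hDp, a]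
  · simp only [Pi.add_apply, Pi.sub_apply, Pi.smul_apply, smul_eq_mul, Pi.one_apply, Pi.neg_apply]
    rcases (hD1 ζ).lt_or_eq with hlt | heq
    · linarith [abs_nonneg (F ζ - a * D ζ)]
    · rw [heq, mul_one]
      linarith [abs_pos.2 (sub_ne_zero.2 hne)]

end DeLeeuw

section Representations

variable {M : Type*} [MetricSpace M] [MeasurableSpace (StoneCech (Wt M))]
  [BorelSpace (StoneCech (Wt M))]

theorem preceq_dirac_of_representsMolecule (basept : M)
    (h3 : ∃ x y z : M, x ≠ y ∧ x ≠ z ∧ y ≠ z) (p : Wt M) {μ : Measure (StoneCech (Wt M))}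
    [IsFiniteMeasure μ] (hμ : RepresentsMolecule basept p μ) :
    Preceq (Measure.dirac (stoneCechUnit p)) μ := by
  rintro g ⟨hgc, hgG⟩
  obtain ⟨⟨x, y⟩, hxy⟩ := p
  obtain ⟨C, hC⟩ := (isCompact_range hgc).bddAbove
  have hgC (q : Wt M) : g (stoneCechUnit q) ≤ C.toNNReal :=
    (hC ⟨stoneCechUnit q, rfl⟩).trans (Real.le_coe_toNNReal C)
  set f := potential (fun q => g (stoneCechUnit q)) y
  have hf := (hgG.lipschitzWith_potential h3 hgC y).sub (LipschitzWith.const (f basept))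
  obtain ⟨F, hF⟩ := exists_isDeLeeuwTransform hf
  have hFg (ζ : StoneCech (Wt M)) : F ζ ≤ g ζ :=
    denseRange_stoneCechUnit.induction_on ζ (isClosed_le hF.1 hgc) fun ⟨⟨u, v⟩, huv⟩ =>
      le_of_mul_le_mul_left (by
        rw [hF.dist_mul_apply huv, sub_sub_sub_cancel_right]
        exact hgG.potential_sub_le h3 y huv) (dist_pos.2 huv)
  have hFp : F (stoneCechUnit ⟨(x, y), hxy⟩) = g (stoneCechUnit ⟨(x, y), hxy⟩) := by
    refine mul_left_cancel₀ (dist_ne_zero.2 hxy) ?_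
    rw [hF.dist_mul_apply hxy, sub_sub_sub_cancel_right, potential, potential, dif_neg hxy,
      dif_pos rfl, sub_zero]
  calc ∫ ζ, g ζ ∂Measure.dirac (stoneCechUnit ⟨(x, y), hxy⟩)
      = F (stoneCechUnit ⟨(x, y), hxy⟩) := by rw [integral_dirac, hFp]
    _ = ∫ ζ, F ζ ∂μ := by rw [hμ _ ⟨_, hf⟩ (sub_self _) F hF.1 hF.2, hF.2]
    _ ≤ ∫ ζ, g ζ ∂μ := integral_mono hF.1.integrable_of_compactSpace
        hgc.integrable_of_compactSpace hFg

theorem representsMolecule_of_preceq_dirac (basept : M) (p : Wt M)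
    {ν : Measure (StoneCech (Wt M))} [IsFiniteMeasure ν]
    (hν : Preceq ν (Measure.dirac (stoneCechUnit p))) : RepresentsMolecule basept p ν := by
  intro f _ _ F hFc hFq
  have hF : IsDeLeeuwTransform f F := ⟨hFc, hFq⟩
  have h1 := hν F hF.mem_GSet
  have h2 := hν _ hF.neg.mem_GSet
  simp only [integral_dirac, Pi.neg_apply, integral_neg, neg_le_neg_iff] at h1 h2
  rw [← hFq p]
  exact le_antisymm h1 h2

theorem isMinimal_dirac (h3 : ∃ x y z : M, x ≠ y ∧ x ≠ z ∧ y ≠ z) (p : Wt M) :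
    IsMinimal (Measure.dirac (stoneCechUnit p)) := fun _ _ _ hν =>
  preceq_dirac_of_representsMolecule p.1.1 h3 p (representsMolecule_of_preceq_dirac p.1.1 p hν)

theorem Preceq.measure_pos_eq_zero {μ : Measure (StoneCech (Wt M))} [IsFiniteMeasure μ]
    {a : StoneCech (Wt M)} (hμ : Preceq μ (Measure.dirac a)) {g : StoneCech (Wt M) → ℝ}
    (hg : g ∈ GSet M) (hg0 : 0 ≤ g) (hga : g a = 0) : μ {ζ | 0 < g ζ} = 0 := by
  have hint : ∫ ζ, g ζ ∂μ = 0 :=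
    le_antisymm (by simpa [integral_dirac, hga] using hμ g hg) (integral_nonneg hg0)
  have hae := (integral_eq_zero_iff_of_nonneg hg0 hg.1.integrable_of_compactSpace).1 hint
  exact measure_mono_null (fun ζ hζ => ne_of_gt hζ) (ae_iff.1 hae)

theorem eq_dirac_of_preceq_dirac {p : Wt M} {μ : Measure (StoneCech (Wt M))} [IsFiniteMeasure μ]
    [μ.InnerRegular] (hμδ : Preceq μ (Measure.dirac (stoneCechUnit p)))
    (hδμ : Preceq (Measure.dirac (stoneCechUnit p)) μ) :
    μ = Measure.dirac (stoneCechUnit p) := by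
  have hmass : μ univ = 1 := by
    have h1 := hμδ 1 one_mem_GSet
    have h2 := hδμ 1 one_mem_GSet
    simp only [Pi.one_apply, integral_const, smul_eq_mul, mul_one, measureReal_def,
      measure_univ, ENNReal.toReal_one] at h1 h2
    exact (ENNReal.toReal_eq_one_iff _).1 (le_antisymm h1 h2)
  have hnull : μ {stoneCechUnit p}ᶜ = 0 := by
    refine measure_eq_zero_of_forall_nhds_null (measurableSet_singleton _).compl fun ζ hζ => ?_
    obtain ⟨g, hg, hg0, hgp, hgζ⟩ := exists_mem_GSet_pos_of_ne hζ
    exact ⟨_, (isOpen_lt continuous_const hg.1).mem_nhds hgζ, hμδ.measure_pos_eq_zero hg hg0 hgp⟩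
  have hpoint : μ {stoneCechUnit p} = 1 := by
    rw [← hmass]
    exact measure_congr (ae_eq_univ.2 hnull)
  have hae : ∀ᵐ ζ ∂μ, ζ ∈ ({stoneCechUnit p} : Finset _) := by
    simpa [ae_iff, compl_def] using hnull
  simpa [hpoint] using Measure.ae_mem_finset_iff.1 hae

end Representations

theorem stmt19 {M : Type*} [MetricSpace M]
    [MeasurableSpace (StoneCech (Wt M))] [BorelSpace (StoneCech (Wt M))]
    (basept : M) (h3 : ∃ x y z : M, x ≠ y ∧ x ≠ z ∧ y ≠ z)
    (p : Wt M) :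
    (∀ μ : Measure (StoneCech (Wt M)), IsFiniteMeasure μ → μ.InnerRegular →
      RepresentsMolecule basept p μ → Preceq (Measure.dirac (stoneCechUnit p)) μ) ∧
    IsMinimal (Measure.dirac (stoneCechUnit p)) ∧
    (∀ μ : Measure (StoneCech (Wt M)), IsFiniteMeasure μ → μ.InnerRegular →
      IsMinimal μ → RepresentsMolecule basept p μ →
      μ = Measure.dirac (stoneCechUnit p)) := by
  refine ⟨fun μ _ _ hμ => preceq_dirac_of_representsMolecule basept h3 p hμ,
    isMinimal_dirac h3 p, fun μ _ _ hmin hμ => ?_⟩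
  have hδμ := preceq_dirac_of_representsMolecule basept h3 p hμ
  exact eq_dirac_of_preceq_dirac (hmin _ inferInstance (Measure.innerRegular_dirac _) hδμ) hδμ
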